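/- Let α₀ ∈ ℝ∖{0} and ω > 0, and let p ∈ ℂ be such that p + iωn ≠ 0 and log(p + iωn) + 4πβ₀ ≠ 0 for all n ∈ ℤ. Then 𝓛(α₀,p) is a compact operator on ℓ²(ℤ;ℂ). -/

import Mathlib

open MeasureTheory

/-- `β₀ := (γ - log 2)/(2π) - i/8`, with `γ` the Euler–Mascheroni constant. -/
noncomputable def beta0 : ℂ :=
  (((Real.eulerMascheroniConstant - Real.log 2) / (2 * Real.pi) : ℝ) : ℂ) - Complex.I / 8

/-- `h(z) := 2πi / (log z + 4πβ₀)`, with the principal branch of the complex logarithm. -/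
noncomputable def hfun (z : ℂ) : ℂ :=
  2 * (Real.pi : ℂ) * Complex.I / (Complex.log z + 4 * (Real.pi : ℂ) * beta0)

/-!
The operator factors as `𝓛 = M_c ∘ (S - S⁻¹)`, where `S` is the shift of `ℓ²(ℤ)` and `M_c` is the
diagonal operator with entries `c n = -α₀ h(p + iωn)`. Since `‖log z‖ ≥ log ‖z‖ → ∞`, we have
`h(z) → 0` as `z → ∞`, so `c n → 0`. Hence `M_c` is the operator-norm limit of the finite-rank
diagonal operators with the truncations of `c` as entries, so it is compact, and so is its
composition with the bounded operator `S - S⁻¹`.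
-/

open Filter Topology Bornology
open scoped ENNReal lp

section Reindex

variable {ι κ 𝕜 E : Type*} [NormedAddCommGroup E] {p : ℝ≥0∞}

theorem Memℓp.comp_equiv {f : κ → E} (hf : Memℓp f p) (e : ι ≃ κ) : Memℓp (f ∘ e) p := by
  rcases p.trichotomy with rfl | rfl | hp
  · rw [memℓp_zero_iff] at hf ⊢
    exact hf.preimage e.injective.injOn
  · rw [memℓp_infty_iff] at hf ⊢
    rwa [show (fun i => ‖(f ∘ e) i‖) = (fun k => ‖f k‖) ∘ e from rfl, e.surjective.range_comp]
  · rw [memℓp_gen_iff hp] at hf ⊢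
    exact e.summable_iff.mpr hf

theorem lp.norm_comp_equiv [Fact (1 ≤ p)] (e : ι ≃ κ) (f : lp (fun _ : κ => E) p) :
    ‖(⟨f ∘ e, (lp.memℓp f).comp_equiv e⟩ : lp (fun _ : ι => E) p)‖ = ‖f‖ := by
  rcases p.dichotomy with rfl | hp
  · simp only [lp.norm_eq_ciSup]
    exact e.iSup_comp (g := fun k => ‖f k‖)
  · simp only [lp.norm_eq_tsum_rpow (zero_lt_one.trans_le hp)]
    congr 1
    exact e.tsum_eq (fun k => ‖f k‖ ^ p.toReal)

variable [NormedField 𝕜] [NormedSpace 𝕜 E] [Fact (1 ≤ p)]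

variable (𝕜 E p) in
noncomputable def lp.compEquiv (e : ι ≃ κ) :
    lp (fun _ : κ => E) p →ₗᵢ[𝕜] lp (fun _ : ι => E) p where
  toFun f := ⟨f ∘ e, (lp.memℓp f).comp_equiv e⟩
  map_add' _ _ := rfl
  map_smul' _ _ := rfl
  norm_map' := lp.norm_comp_equiv e

end Reindex

theorem Memℓp.infty_of_tendsto_cofinite {ι E : Type*} [NormedAddCommGroup E] {f : ι → E} {a : E}
    (hf : Tendsto f cofinite (𝓝 a)) : Memℓp f ∞ :=
  memℓp_infty_iff.mpr hf.norm.bddAbove_range_of_cofinite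

theorem Complex.tendsto_log_cobounded : Tendsto log (cobounded ℂ) (cobounded ℂ) := by
  rw [← tendsto_norm_atTop_iff_cobounded]
  refine tendsto_atTop_mono (fun z => ?_)
    (Real.tendsto_log_atTop.comp tendsto_norm_cobounded_atTop)
  simpa [Complex.log_re] using Complex.re_le_norm (log z)

theorem tendsto_const_add_mul_intCast_cofinite {α : Type*} [NormedField α] [NormSMulClass ℤ α]
    {a : α} (ha : a ≠ 0) (b : α) :
    Tendsto (fun n : ℤ => b + a * n) cofinite (cobounded α) := by
  rw [Int.cofinite_eq]
  exact (tendsto_const_add_cobounded b).comp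
    ((tendsto_mul_left_cobounded ha).comp tendsto_intCast_atBot_sup_atTop_cobounded)

theorem IsCompactOperator.of_forall_mem_submodule {𝕜 E F : Type*} [RCLike 𝕜]
    [NormedAddCommGroup E] [NormedSpace 𝕜 E] [NormedAddCommGroup F] [NormedSpace 𝕜 F]
    (f : E →L[𝕜] F) (V : Submodule 𝕜 F) [FiniteDimensional 𝕜 V] (hf : ∀ x, f x ∈ V) :
    IsCompactOperator f := by
  have : IsCompactOperator (f.codRestrict V hf) := isCompactOperator_of_locallyCompactSpace_dom _
  exact this.clm_comp V.subtypeL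

namespace lp

variable {ι 𝕜 E : Type*} [NormedAddCommGroup E] {p : ℝ≥0∞}

noncomputable def indicator (s : Set ι) (f : lp (fun _ : ι => E) p) : lp (fun _ : ι => E) p :=
  ⟨s.indicator f, (lp.memℓp f).mono' fun i => norm_indicator_le_norm_self _ i⟩

theorem indicator_apply (s : Set ι) (f : lp (fun _ : ι => E) p) (i : ι) :
    indicator s f i = s.indicator f i := rfl

theorem tendsto_indicator_finset_atTop {f : ℓ^∞(ι, E)} (hf : Tendsto (⇑f) cofinite (𝓝 0)) :
    Tendsto (fun s : Finset ι => indicator (s : Set ι) f) atTop (𝓝 f) := by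
  refine Metric.tendsto_nhds.mpr fun ε hε => ?_
  have hfin : {i | ε / 2 ≤ ‖f i‖}.Finite := by
    have hsmall :=
      (tendsto_zero_iff_norm_tendsto_zero.mp hf).eventually (gt_mem_nhds (half_pos hε))
    simpa using eventually_cofinite.mp hsmall
  filter_upwards [eventually_ge_atTop hfin.toFinset] with s hs
  refine (norm_le_of_forall_le (half_pos hε).le fun i => ?_).trans_lt (half_lt_self hε)
  by_cases hi : i ∈ s
  · simp [indicator_apply, hi, (half_pos hε).le]
  · have : i ∉ {i | ε / 2 ≤ ‖f i‖} := fun h => hi (hs (hfin.mem_toFinset.mpr h))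
    simpa [indicator_apply, hi] using (not_le.mp this).le

variable [RCLike 𝕜] [Fact (1 ≤ p)]

variable (𝕜 p) in
noncomputable def diagonalL :
    ℓ^∞(ι, 𝕜) →L[𝕜] lp (fun _ : ι => 𝕜) p →L[𝕜] lp (fun _ : ι => 𝕜) p :=
  holderL (K := 1) p (fun _ => ContinuousLinearMap.mul 𝕜 𝕜)
    fun _ => ContinuousLinearMap.opNorm_mul_le 𝕜 𝕜

@[simp]
theorem diagonalL_apply (c : ℓ^∞(ι, 𝕜)) (u : lp (fun _ : ι => 𝕜) p) (i : ι) :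
    diagonalL 𝕜 p c u i = c i * u i := rfl

theorem isCompactOperator_diagonalL_indicator (s : Finset ι) (c : ℓ^∞(ι, 𝕜)) :
    IsCompactOperator (diagonalL 𝕜 p (indicator (s : Set ι) c)) := by
  classical
  refine .of_forall_mem_submodule _ (Submodule.span 𝕜 (s.image fun i => lp.single p i (1 : 𝕜)))
    fun u => ?_
  have hsum :
      diagonalL 𝕜 p (indicator (s : Set ι) c) u = ∑ i ∈ s, (c i * u i) • lp.single p i 1 := by
    refine lp.ext (funext fun j => ?_)
    rw [lp.coeFn_sum, Finset.sum_apply]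
    by_cases hj : j ∈ s <;> simp [indicator_apply, lp.single_apply, Pi.single_apply, hj]
  rw [hsum]
  exact Submodule.sum_mem _ fun i hi =>
    Submodule.smul_mem _ _ (Submodule.subset_span (Finset.mem_image_of_mem _ hi))

theorem isCompactOperator_diagonalL {c : ℓ^∞(ι, 𝕜)} (hc : Tendsto (⇑c) cofinite (𝓝 0)) :
    IsCompactOperator (diagonalL 𝕜 p c) :=
  isCompactOperator_of_tendsto
    ((diagonalL 𝕜 p).continuous.tendsto c |>.comp (tendsto_indicator_finset_atTop hc))
    (.of_forall fun s => isCompactOperator_diagonalL_indicator s c)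

end lp

theorem tendsto_hfun_cobounded : Tendsto hfun (cobounded ℂ) (𝓝 0) := by
  have h := (tendsto_inv₀_cobounded.comp
    ((tendsto_add_const_cobounded (4 * (Real.pi : ℂ) * beta0)).comp
      Complex.tendsto_log_cobounded)).const_mul (2 * (Real.pi : ℂ) * Complex.I)
  rw [mul_zero] at h
  exact h.congr fun z => (div_eq_mul_inv _ _).symm

theorem Lop_isCompactOperator (α₀ ω : ℝ) (hω : 0 < ω) (p : ℂ) :
    ∃ L : lp (fun _ : ℤ => ℂ) 2 →L[ℂ] lp (fun _ : ℤ => ℂ) 2,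
      (∀ u : lp (fun _ : ℤ => ℂ) 2, ∀ n : ℤ,
        (L u : ∀ _ : ℤ, ℂ) n =
          -(α₀ : ℂ) * hfun (p + Complex.I * (ω : ℂ) * (n : ℂ)) *
            ((u : ∀ _ : ℤ, ℂ) (n + 1) - (u : ∀ _ : ℤ, ℂ) (n - 1))) ∧
      IsCompactOperator L := by
  have hc : Tendsto (fun n : ℤ => -(α₀ : ℂ) * hfun (p + Complex.I * (ω : ℂ) * (n : ℂ)))
      cofinite (𝓝 0) := by
    simpa using (tendsto_hfun_cobounded.comp (tendsto_const_add_mul_intCast_cofinite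
      (mul_ne_zero Complex.I_ne_zero (Complex.ofReal_ne_zero.mpr hω.ne')) p)).const_mul (-(α₀ : ℂ))
  let c : ℓ^∞(ℤ, ℂ) := ⟨_, Memℓp.infty_of_tendsto_cofinite hc⟩
  let shift (k : ℤ) := (lp.compEquiv ℂ ℂ 2 (Equiv.addRight k)).toContinuousLinearMap
  refine ⟨lp.diagonalL ℂ 2 c ∘L (shift 1 - shift (-1)), fun u n => ?_, ?_⟩
  · show c n * (u (n + 1) - u (n + -1)) = _
    rw [Int.add_neg_one]
  · rw [ContinuousLinearMap.coe_comp]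
    exact (lp.isCompactOperator_diagonalL hc).comp_clm _
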